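/- Define \tilde{\sigma}_j(t) = \tilde{\rho}_j(t) - \tilde{\rho}_{j-1}(t) for the scaled rarefaction wave. Then for all j \geq 1 and all t with \epsilon t \leq 1, one has 0 \leq \tilde{\sigma}_j(t) \leq \epsilon/(8 (j-1)!). -/

import Mathlib

/-!
Write `x = εt` and `S n = ∑_{k<n} x^k/k!`, so that `ρ̃_j = (ε/8) S j / S (j+1)`. With `j = m + 1`,
`A = S (m+1)`, `a = x^m/m!` and `b = x^(m+1)/(m+1)!` we get `S m = A - a` and `S (m+2) = A + b`, and
`σ̃_j = (ε/8) (A/(A+b) - (A-a)/A) = (ε/8) (A(a-b) + ab) / (A(A+b))`.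
For `x ≤ 1` the terms decrease, `b ≤ a`, which gives `σ̃_j ≥ 0`; dropping `-Ab` from the numerator
bounds `σ̃_j` by `(ε/8) a/A`, and `A ≥ 1`, `a ≤ 1/m!`.
-/

open scoped BigOperators

/-- The scaled rarefaction wave with amplitude `ε/8`. -/
noncomputable def scaledRarefaction (ε : ℝ) (j : ℕ) (t : ℝ) : ℝ :=
  if j = 0 then 0 else
    (ε / 8) * (∑ k ∈ Finset.range j, (ε * t) ^ k / (Nat.factorial k : ℝ)) /
      (∑ k ∈ Finset.range (j + 1), (ε * t) ^ k / (Nat.factorial k : ℝ))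

open Finset Nat

lemma div_add_sub_sub_div_mem_Icc {A a b : ℝ} (hA : 0 < A) (hb : 0 ≤ b) (hba : b ≤ a) :
    A / (A + b) - (A - a) / A ∈ Set.Icc 0 (a / A) := by
  have hAb : 0 < A + b := by linarith
  have key : A / (A + b) - (A - a) / A = (A * (a - b) + a * b) / (A * (A + b)) := by
    field_simp
    ring
  rw [key]
  constructor
  · exact div_nonneg (add_nonneg (mul_nonneg hA.le (sub_nonneg.mpr hba))
      (mul_nonneg (hb.trans hba) hb)) (by positivity)
  · rw [div_le_div_iff₀ (by positivity) hA]
    nlinarith [mul_nonneg (mul_nonneg hA.le hA.le) hb]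

lemma partialSum_ratio_sub_mem_Icc {c : ℕ → ℝ} {m : ℕ} (hc : 0 ≤ c (m + 1))
    (hdec : c (m + 1) ≤ c m) (hpos : 0 < ∑ k ∈ range (m + 1), c k) :
    (∑ k ∈ range (m + 1), c k) / (∑ k ∈ range (m + 2), c k) -
        (∑ k ∈ range m, c k) / (∑ k ∈ range (m + 1), c k) ∈
      Set.Icc 0 (c m / ∑ k ∈ range (m + 1), c k) := by
  have hm : ∑ k ∈ range m, c k = ∑ k ∈ range (m + 1), c k - c m := by
    rw [sum_range_succ]; ring
  rw [hm, sum_range_succ _ (m + 1)]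
  exact div_add_sub_sub_div_mem_Icc hpos hc hdec

noncomputable def expPartialSum (x : ℝ) (n : ℕ) : ℝ :=
  ∑ k ∈ range n, x ^ k / (k ! : ℝ)

lemma scaledRarefaction_eq (ε : ℝ) (m : ℕ) (t : ℝ) :
    scaledRarefaction ε m t =
      ε / 8 * (expPartialSum (ε * t) m / expPartialSum (ε * t) (m + 1)) := by
  rw [scaledRarefaction, expPartialSum, expPartialSum, mul_div_assoc]
  split_ifs with hm
  · simp [hm]
  · rfl

lemma one_le_expPartialSum {x : ℝ} (hx : 0 ≤ x) (m : ℕ) : 1 ≤ expPartialSum x (m + 1) := by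
  rw [expPartialSum, sum_range_succ']
  have : 0 ≤ ∑ k ∈ range m, x ^ (k + 1) / ((k + 1)! : ℝ) := by positivity
  simpa using this

lemma pow_div_factorial_succ_le {x : ℝ} (hx0 : 0 ≤ x) (hx1 : x ≤ 1) (m : ℕ) :
    x ^ (m + 1) / ((m + 1)! : ℝ) ≤ x ^ m / (m ! : ℝ) :=
  div_le_div₀ (by positivity) (pow_le_pow_of_le_one hx0 hx1 m.le_succ) (by positivity)
    (by exact_mod_cast factorial_le m.le_succ)

theorem sigma_bound (ε : ℝ) (hε : 0 < ε) (j : ℕ) (hj : 1 ≤ j)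
    (t : ℝ) (ht : 0 ≤ t) (hts : ε * t ≤ 1) :
    0 ≤ scaledRarefaction ε j t - scaledRarefaction ε (j - 1) t ∧
      scaledRarefaction ε j t - scaledRarefaction ε (j - 1) t ≤
        ε / (8 * (Nat.factorial (j - 1) : ℝ)) := by
  obtain ⟨m, rfl⟩ := Nat.exists_eq_add_of_le' hj
  have hx : 0 ≤ ε * t := by positivity
  have hS := one_le_expPartialSum hx m
  obtain ⟨hlow, hupp⟩ := partialSum_ratio_sub_mem_Icc (c := fun k => (ε * t) ^ k / (k ! : ℝ))
    (by positivity) (pow_div_factorial_succ_le hx hts m) (zero_lt_one.trans_le hS)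
  have hterm : (ε * t) ^ m / (m ! : ℝ) ≤ 1 / (m ! : ℝ) :=
    div_le_div_of_nonneg_right (pow_le_one₀ hx hts) (by positivity)
  rw [Nat.add_sub_cancel, scaledRarefaction_eq, scaledRarefaction_eq, ← mul_sub]
  refine ⟨mul_nonneg (by positivity) hlow, ?_⟩
  calc ε / 8 * (expPartialSum (ε * t) (m + 1) / expPartialSum (ε * t) (m + 1 + 1) -
          expPartialSum (ε * t) m / expPartialSum (ε * t) (m + 1))
      ≤ ε / 8 * ((ε * t) ^ m / (m ! : ℝ) / expPartialSum (ε * t) (m + 1)) :=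
        mul_le_mul_of_nonneg_left hupp (by positivity)
    _ ≤ ε / 8 * (1 / (m ! : ℝ)) :=
        mul_le_mul_of_nonneg_left ((div_le_self (by positivity) hS).trans hterm) (by positivity)
    _ = ε / (8 * (m ! : ℝ)) := by field_simp
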